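/- The deduction system consisting of the rules (Ref) and (Sim_i) — where (Ref) infers A ⇒ A and (Sim_i) infers A ∪ ((C \ B) + i) ⇒ D + i from A ⇒ B + i and C ⇒ D, for any i ∈ ℤ — proves exactly the same formulas from any theory Σ as the system consisting of (Ax), (Cut), and (Shf). -/

import Mathlib

namespace TAI

variable {Y : Type*}

/-- Time shift of a set of time-annotated attributes: `M + j`. -/
def shiftS (M : Set (Y × ℤ)) (j : ℤ) : Set (Y × ℤ) :=
  (fun p : Y × ℤ => (p.1, p.2 + j)) '' M

/-- Time shift of a finite set of time-annotated attributes: `A + j`. -/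
def shiftF [DecidableEq Y] (A : Finset (Y × ℤ)) (j : ℤ) : Finset (Y × ℤ) :=
  A.image (fun p => (p.1, p.2 + j))

/-- An attribute implication over `Y` annotated by time points: a pair
`(A, B)` of finite subsets of `T_Y = Y × ℤ`, read as `A ⇒ B`. -/
abbrev Fml (Y : Type*) := Finset (Y × ℤ) × Finset (Y × ℤ)

/-- `A ⇒ B` is true in `M ⊆ T_Y`: for every `i ∈ ℤ`, `A + i ⊆ M` implies `B + i ⊆ M`. -/
def Holds [DecidableEq Y] (M : Set (Y × ℤ)) (φ : Fml Y) : Prop :=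
  ∀ i : ℤ, ↑(shiftF φ.1 i) ⊆ M → ↑(shiftF φ.2 i) ⊆ M

/-- The models of a theory `T`. -/
def Mods [DecidableEq Y] (T : Set (Fml Y)) : Set (Set (Y × ℤ)) :=
  {M | ∀ φ ∈ T, Holds M φ}

/-- Semantic entailment: `T ⊨ φ`. -/
def Entails [DecidableEq Y] (T : Set (Fml Y)) (φ : Fml Y) : Prop :=
  ∀ M ∈ Mods T, Holds M φ

/-- Semantic closure `[M]_Σ`. -/
def semClos [DecidableEq Y] (T : Set (Fml Y)) (M : Set (Y × ℤ)) : Set (Y × ℤ) :=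
  ⋂₀ {N | N ∈ Mods T ∧ M ⊆ N}

/-- Classical (time-point-free) truth: `M ⊨_PL A ⇒ B` iff `A ⊆ M` implies `B ⊆ M`. -/
def HoldsPL (M : Set (Y × ℤ)) (φ : Fml Y) : Prop :=
  ↑φ.1 ⊆ M → ↑φ.2 ⊆ M

/-- Classical models. -/
def ModsPL (T : Set (Fml Y)) : Set (Set (Y × ℤ)) :=
  {M | ∀ φ ∈ T, HoldsPL M φ}

/-- Classical semantic entailment `⊨_PL`. -/
def EntailsPL (T : Set (Fml Y)) (φ : Fml Y) : Prop :=
  ∀ M ∈ ModsPL T, HoldsPL M φ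

/-- `Σ^PL = {A + i ⇒ B + i | A ⇒ B ∈ Σ, i ∈ ℤ}`. -/
def shiftAll [DecidableEq Y] (T : Set (Fml Y)) : Set (Fml Y) :=
  {ψ | ∃ φ ∈ T, ∃ i : ℤ, ψ = (shiftF φ.1 i, shiftF φ.2 i)}

/-- One step of the syntactic closure construction. -/
def synStep [DecidableEq Y] (T : Set (Fml Y)) (M : Set (Y × ℤ)) : Set (Y × ℤ) :=
  M ∪ ⋃₀ {S | ∃ φ ∈ T, ∃ i : ℤ, ↑(shiftF φ.1 i) ⊆ M ∧ S = (↑(shiftF φ.2 i) : Set (Y × ℤ))}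

/-- `M_Σ^n`. -/
def synIter [DecidableEq Y] (T : Set (Fml Y)) (M : Set (Y × ℤ)) : ℕ → Set (Y × ℤ)
  | 0 => M
  | n + 1 => synStep T (synIter T M n)

/-- The syntactic closure `M_Σ^ω`. -/
def synClos [DecidableEq Y] (T : Set (Fml Y)) (M : Set (Y × ℤ)) : Set (Y × ℤ) :=
  ⋃ n : ℕ, synIter T M n

/-- Provability from `T` using the rules (Ax), (Cut) and (Shf). -/
inductive Prov [DecidableEq Y] (T : Set (Fml Y)) : Fml Y → Prop
  | hyp {φ : Fml Y} : φ ∈ T → Prov T φ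
  | ax (A B : Finset (Y × ℤ)) : Prov T (A ∪ B, A)
  | cut {A B C D : Finset (Y × ℤ)} :
      Prov T (A, B) → Prov T (B ∪ C, D) → Prov T (A ∪ C, D)
  | shf {A B : Finset (Y × ℤ)} (i : ℤ) :
      Prov T (A, B) → Prov T (shiftF A i, shiftF B i)

/-- Provability from `T` using only the rules (Ax) and (Cut) (no time shifts). -/
inductive ProvAC [DecidableEq Y] (T : Set (Fml Y)) : Fml Y → Prop
  | hyp {φ : Fml Y} : φ ∈ T → ProvAC T φ
  | ax (A B : Finset (Y × ℤ)) : ProvAC T (A ∪ B, A)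
  | cut {A B C D : Finset (Y × ℤ)} :
      ProvAC T (A, B) → ProvAC T (B ∪ C, D) → ProvAC T (A ∪ C, D)

/-- Provability from `T` using the rules (Ax) and (Cut_i). -/
inductive ProvCuti [DecidableEq Y] (T : Set (Fml Y)) : Fml Y → Prop
  | hyp {φ : Fml Y} : φ ∈ T → ProvCuti T φ
  | ax (A B : Finset (Y × ℤ)) : ProvCuti T (A ∪ B, A)
  | cuti {A B C D : Finset (Y × ℤ)} (i : ℤ) :
      ProvCuti T (A, shiftF B i) → ProvCuti T (B ∪ C, D) →
      ProvCuti T (A ∪ shiftF C i, shiftF D i)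

/-- Provability from `T` using the rules (Ref) and (Sim_i). -/
inductive ProvRS [DecidableEq Y] (T : Set (Fml Y)) : Fml Y → Prop
  | hyp {φ : Fml Y} : φ ∈ T → ProvRS T φ
  | ref (A : Finset (Y × ℤ)) : ProvRS T (A, A)
  | simi {A B C D : Finset (Y × ℤ)} (i : ℤ) :
      ProvRS T (A, shiftF B i) → ProvRS T (C, D) →
      ProvRS T (A ∪ shiftF (C \ B) i, shiftF D i)

/-- The closure operator induced by a closure system `S`. -/
def closOp (S : Set (Set (Y × ℤ))) (M : Set (Y × ℤ)) : Set (Y × ℤ) :=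
  ⋂₀ {N | N ∈ S ∧ M ⊆ N}

/-- The least time point occurring in a finite set (`0` for the empty set). -/
def lo (A : Finset (Y × ℤ)) : ℤ :=
  WithTop.untopD 0 (A.image Prod.snd).min

/-- The greatest time point occurring in a finite set (`0` for the empty set). -/
def hi (A : Finset (Y × ℤ)) : ℤ :=
  WithBot.unbotD 0 (A.image Prod.snd).max

/-- A formula `A ⇒ B` is predictive if `A ≠ ∅`, `B ≠ ∅`, and every time point in
`A` is less than or equal to every time point in `B`. -/
def Predictive (φ : Fml Y) : Prop :=
  φ.1.Nonempty ∧ φ.2.Nonempty ∧ ∀ p ∈ φ.1, ∀ q ∈ φ.2, p.2 ≤ q.2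

/-!
Each system derives the rules of the other. (Ref) is the instance `A ∪ ∅ ⇒ A` of (Ax), and
(Sim_i) is a cut of `A ⇒ B + i` against the `i`-shift of `B ∪ (C \ B) ⇒ D`, which follows
from `C ⇒ D` since `C ⊆ B ∪ (C \ B)`. Conversely, with (Ref) at hand, (Sim_0) yields weakening
and transitivity, hence (Ax) and (Cut), while (Sim_i) applied to `A + i ⇒ A + i` yields (Shf).
-/

section Rules

variable [DecidableEq Y] {T : Set (Fml Y)} {A B C D : Finset (Y × ℤ)}

@[simp]
lemma shiftF_zero (A : Finset (Y × ℤ)) : shiftF A 0 = A := by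
  simp [shiftF]

@[simp]
lemma shiftF_empty (i : ℤ) : shiftF (∅ : Finset (Y × ℤ)) i = ∅ := Finset.image_empty _

lemma shiftF_union (A B : Finset (Y × ℤ)) (i : ℤ) :
    shiftF (A ∪ B) i = shiftF A i ∪ shiftF B i := Finset.image_union _ _

lemma Prov.of_subset (h : B ⊆ A) : Prov T (A, B) := by
  simpa [Finset.union_eq_right.mpr h] using Prov.ax (T := T) B A

lemma Prov.trans (hAB : Prov T (A, B)) (hBC : Prov T (B, C)) : Prov T (A, C) := by
  simpa using Prov.cut hAB (C := ∅) (by simpa using hBC)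

lemma Prov.simi (i : ℤ) (hAB : Prov T (A, shiftF B i)) (hCD : Prov T (C, D)) :
    Prov T (A ∪ shiftF (C \ B) i, shiftF D i) := by
  have hC : Prov T (B ∪ C \ B, C) := Prov.of_subset <| by
    rw [Finset.union_sdiff_self_eq_union]
    exact Finset.subset_union_right
  have hshift := Prov.shf i (hC.trans hCD)
  rw [shiftF_union] at hshift
  exact Prov.cut hAB hshift

lemma ProvRS.of_subset (h : B ⊆ A) : ProvRS T (A, B) := by
  simpa [Finset.sdiff_eq_empty_iff_subset.mpr h] using
    ProvRS.simi (B := A) 0 (by simpa using ProvRS.ref (T := T) A) (ProvRS.ref B)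

lemma ProvRS.trans (hAB : ProvRS T (A, B)) (hBC : ProvRS T (B, C)) : ProvRS T (A, C) := by
  simpa using ProvRS.simi (B := B) 0 (by simpa using hAB) hBC

lemma ProvRS.shf (i : ℤ) (h : ProvRS T (A, B)) : ProvRS T (shiftF A i, shiftF B i) := by
  simpa using ProvRS.simi i (ProvRS.ref (shiftF A i)) h

lemma ProvRS.cut (hAB : ProvRS T (A, B)) (hBCD : ProvRS T (B ∪ C, D)) :
    ProvRS T (A ∪ C, D) := by
  have hsim : ProvRS T (A ∪ (B ∪ C) \ B, D) := by
    simpa using ProvRS.simi (B := B) 0 (by simpa using hAB) hBCD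
  refine ProvRS.trans (ProvRS.of_subset ?_) hsim
  rw [Finset.union_sdiff_left]
  exact Finset.union_subset_union_right Finset.sdiff_subset

lemma Prov.toProvRS {φ : Fml Y} (h : Prov T φ) : ProvRS T φ := by
  induction h with
  | hyp h => exact ProvRS.hyp h
  | ax A B => exact ProvRS.of_subset Finset.subset_union_left
  | cut _ _ ihAB ihBCD => exact ihAB.cut ihBCD
  | shf i _ ih => exact ih.shf i

lemma ProvRS.toProv {φ : Fml Y} (h : ProvRS T φ) : Prov T φ := by
  induction h with
  | hyp h => exact Prov.hyp h
  | ref A => exact Prov.of_subset subset_rfl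
  | simi i _ _ ihAB ihCD => exact Prov.simi i ihAB ihCD

end Rules

theorem prov_iff_provRS_general [DecidableEq Y] :
    ∀ (T : Set (Fml Y)) (φ : Fml Y), Prov T φ ↔ ProvRS T φ :=
  fun _ _ => ⟨Prov.toProvRS, ProvRS.toProv⟩

/-- the system with rules (Ref) and (Sim_i) proves exactly the
same formulas from any theory as the system with (Ax), (Cut) and (Shf). -/
theorem prov_iff_provRS [DecidableEq Y] [Fintype Y] [Nonempty Y] :
    ∀ (T : Set (Fml Y)) (φ : Fml Y), Prov T φ ↔ ProvRS T φ :=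
  prov_iff_provRS_general

end TAI
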